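/- Let L₁ = L(π₁, U₁) and L₂ = L(π₂, U₂) be linear Dirac structures given by subspaces U_k ⊆ V_k* and bivectors π_k ∈ ∧²U_k*. A linear map f : V₁ → V₂ is a linear Dirac map if and only if (D1) f*(U₂) ⊆ U₁, and (D2) φ* ∘ (π₁)_♯ ∘ φ = (π₂)_♯, where φ : U₂ → U₁ is the restriction of f*. -/

import Mathlib

/-- The canonical pairing on `V ⊕ V*`: `⟨X+ξ, Y+η⟩ = η(X) + ξ(Y)`. -/
def diracPair {K V : Type*} [Field K] [AddCommGroup V] [Module K V]
    (p q : V × Module.Dual K V) : K :=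
  q.2 p.1 + p.2 q.1

/-- A linear Dirac structure: a subset of `V ⊕ V*` equal to its own orthogonal
complement with respect to the canonical pairing (hence automatically a maximal
isotropic linear subspace). -/
def IsDirac {K V : Type*} [Field K] [AddCommGroup V] [Module K V]
    (L : Set (V × Module.Dual K V)) : Prop :=
  ∀ p, p ∈ L ↔ ∀ q ∈ L, diracPair p q = 0

/-- A linear Dirac map: (M1) `f(L₁ ∩ V₁) ⊆ L₂ ∩ V₂` and (M2′) whenever
`Y + ξ ∈ L₂` and `X + f*ξ ∈ L₁`, then `fX + ξ ∈ L₂`. -/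
def IsDiracMap {K V₁ V₂ : Type*} [Field K]
    [AddCommGroup V₁] [Module K V₁] [AddCommGroup V₂] [Module K V₂]
    (f : V₁ →ₗ[K] V₂)
    (L₁ : Set (V₁ × Module.Dual K V₁)) (L₂ : Set (V₂ × Module.Dual K V₂)) : Prop :=
  (∀ x : V₁, (x, (0 : Module.Dual K V₁)) ∈ L₁ →
      (f x, (0 : Module.Dual K V₂)) ∈ L₂) ∧
  (∀ (X : V₁) (Y : V₂) (ξ : Module.Dual K V₂),
      (Y, ξ) ∈ L₂ → (X, f.dualMap ξ) ∈ L₁ → (f X, ξ) ∈ L₂)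

/-- `L(π, U) = {x + ξ ∈ V ⊕ U : x|_U = π(ξ, −)}` for a subspace `U ⊆ V*` and a
bivector `π ∈ ∧²U*`. -/
def LPi {K V : Type*} [Field K] [AddCommGroup V] [Module K V]
    (U : Submodule K (Module.Dual K V)) (π : U →ₗ[K] U →ₗ[K] K) :
    Set (V × Module.Dual K V) :=
  {p | ∃ hξ : p.2 ∈ U, ∀ η : U, (η : Module.Dual K V) p.1 = π ⟨p.2, hξ⟩ η}

/-- In finite dimensions, every functional on a subspace `U ⊆ V*` is evaluation at
some vector of `V`. -/
lemma exists_forall_apply_eq {K V : Type*} [Field K] [AddCommGroup V] [Module K V]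
    [FiniteDimensional K V] (U : Submodule K (Module.Dual K V))
    (φ : Module.Dual K U) : ∃ x : V, ∀ η : U, (η : Module.Dual K V) x = φ η := by
  obtain ⟨ψ, hψ⟩ := LinearMap.dualMap_surjective_of_injective (K := K) (V₁ := U)
    (V₂ := Module.Dual K V) (f := U.subtype) U.injective_subtype φ
  obtain ⟨x, hx⟩ := (Module.evalEquiv K V).surjective ψ
  refine ⟨x, fun η => ?_⟩
  have := congrFun (congrArg DFunLike.coe hψ) η
  simp only [LinearMap.dualMap_apply] at this
  rw [← this, ← hx]
  rfl

/-- For Dirac structures `L₁ = L(π₁, U₁)` and `L₂ = L(π₂, U₂)`, a linear map `f` is a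
linear Dirac map iff (D1) `f*(U₂) ⊆ U₁` and (D2) `φ* ∘ (π₁)_♯ ∘ φ = (π₂)_♯`, where
`φ` is the restriction of `f*` to `U₂`. -/
theorem isDiracMap_iff_D1_D2
    {K V₁ V₂ : Type*} [Field K]
    [AddCommGroup V₁] [Module K V₁] [FiniteDimensional K V₁]
    [AddCommGroup V₂] [Module K V₂] [FiniteDimensional K V₂]
    (f : V₁ →ₗ[K] V₂)
    (U₁ : Submodule K (Module.Dual K V₁)) (π₁ : U₁ →ₗ[K] U₁ →ₗ[K] K)
    (hπ₁ : ∀ ξ : U₁, π₁ ξ ξ = 0)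
    (U₂ : Submodule K (Module.Dual K V₂)) (π₂ : U₂ →ₗ[K] U₂ →ₗ[K] K)
    (hπ₂ : ∀ ξ : U₂, π₂ ξ ξ = 0) :
    IsDiracMap f (LPi U₁ π₁) (LPi U₂ π₂) ↔
      ∃ hD1 : ∀ ξ : U₂, f.dualMap (ξ : Module.Dual K V₂) ∈ U₁,
        ∀ ξ η : U₂,
          π₁ ⟨f.dualMap (ξ : Module.Dual K V₂), hD1 ξ⟩
             ⟨f.dualMap (η : Module.Dual K V₂), hD1 η⟩ = π₂ ξ η := by
  constructor
  · rintro ⟨hM1, hM2⟩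
    have hD1 : ∀ ξ : U₂, f.dualMap (ξ : Module.Dual K V₂) ∈ U₁ := by
      intro ξ
      rw [← Subspace.dualCoannihilator_dualAnnihilator_eq (W := U₁)]
      rw [Submodule.mem_dualAnnihilator]
      intro x hx
      rw [Submodule.mem_dualCoannihilator] at hx
      have hxL : (x, (0 : Module.Dual K V₁)) ∈ LPi U₁ π₁ := by
        refine ⟨U₁.zero_mem, fun η => ?_⟩
        have h0 : (⟨(0 : Module.Dual K V₁), U₁.zero_mem⟩ : U₁) = 0 := rfl
        rw [h0, map_zero]
        exact hx η η.2
      obtain ⟨h0₂, hfx⟩ := hM1 x hxL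
      have h0 : (⟨(0 : Module.Dual K V₂), h0₂⟩ : U₂) = 0 := rfl
      have := hfx ξ
      rw [h0, map_zero] at this
      simpa using this
    refine ⟨hD1, fun ξ η => ?_⟩
    obtain ⟨Y, hY⟩ := exists_forall_apply_eq U₂ (π₂ ξ)
    obtain ⟨X, hX⟩ := exists_forall_apply_eq U₁
      (π₁ ⟨f.dualMap (ξ : Module.Dual K V₂), hD1 ξ⟩)
    have hYL : (Y, (ξ : Module.Dual K V₂)) ∈ LPi U₂ π₂ := ⟨ξ.2, fun ν => hY ν⟩
    have hXL : (X, f.dualMap (ξ : Module.Dual K V₂)) ∈ LPi U₁ π₁ :=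
      ⟨hD1 ξ, fun ν => hX ν⟩
    obtain ⟨hξ₂, hfX⟩ := hM2 X Y (ξ : Module.Dual K V₂) hYL hXL
    have hξξ : (⟨(ξ : Module.Dual K V₂), hξ₂⟩ : U₂) = ξ := rfl
    have h1 : (η : Module.Dual K V₂) (f X) = π₂ ξ η := by
      have := hfX η; rwa [hξξ] at this
    have h2 : (η : Module.Dual K V₂) (f X)
        = π₁ ⟨f.dualMap (ξ : Module.Dual K V₂), hD1 ξ⟩
            ⟨f.dualMap (η : Module.Dual K V₂), hD1 η⟩ :=
      hX ⟨f.dualMap (η : Module.Dual K V₂), hD1 η⟩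
    rw [← h2, h1]
  · rintro ⟨hD1, hD2⟩
    constructor
    · rintro x ⟨h0₁, hx⟩
      refine ⟨U₂.zero_mem, fun η => ?_⟩
      have h0 : (⟨(0 : Module.Dual K V₂), U₂.zero_mem⟩ : U₂) = 0 := rfl
      rw [h0, map_zero, LinearMap.zero_apply]
      have h0' : (⟨(0 : Module.Dual K V₁), h0₁⟩ : U₁) = 0 := rfl
      have := hx ⟨f.dualMap (η : Module.Dual K V₂), hD1 η⟩
      rw [h0', map_zero, LinearMap.zero_apply] at this
      simpa using this
    · rintro X Y ξ ⟨hξ₂, hY⟩ ⟨hfξ, hX⟩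
      refine ⟨hξ₂, fun η => ?_⟩
      have h1 : (η : Module.Dual K V₂) (f X)
          = π₁ ⟨f.dualMap ξ, hfξ⟩ ⟨f.dualMap (η : Module.Dual K V₂), hD1 η⟩ :=
        hX ⟨f.dualMap (η : Module.Dual K V₂), hD1 η⟩
      have hξξ : (⟨f.dualMap ξ, hfξ⟩ : U₁)
          = ⟨f.dualMap ((⟨ξ, hξ₂⟩ : U₂) : Module.Dual K V₂), hD1 ⟨ξ, hξ₂⟩⟩ := rfl
      rw [h1, hξξ, hD2 ⟨ξ, hξ₂⟩ η]
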